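/- The formula P(εx P(x)) → ∃x P(x) is valid in all intuitionistic Kripke ε⊥-models but is not derivable in IPCε; hence the ε⊥-semantics is incomplete for IPCε. -/
import Mathlib


-- Terms of intuitionistic predicate logic with Hilbert’s ε-symbol (de Bruijn indices).
mutual
inductive Tm : Type
  | var : Nat → Tm
  | const : Nat → Tm
  | eps : Fm → Tm
inductive Tms : Type
  | nil : Tms
  | cons : Tm → Tms → Tms
inductive Fm : Type
  | atom : Nat → Tms → Fm
  | bot : Fm
  | top : Fm
  | and : Fm → Fm → Fm
  | or : Fm → Fm → Fm
  | imp : Fm → Fm → Fm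
  | all : Fm → Fm
  | ex : Fm → Fm
end

-- Lifting (shift de Bruijn variables ≥ c by one).
mutual
def Tm.lift : Nat → Tm → Tm
  | c, .var n => if n < c then .var n else .var (n+1)
  | _, .const k => .const k
  | c, .eps A => .eps (Fm.lift (c+1) A)
def Tms.lift : Nat → Tms → Tms
  | _, .nil => .nil
  | c, .cons t ts => .cons (Tm.lift c t) (Tms.lift c ts)
def Fm.lift : Nat → Fm → Fm
  | c, .atom p ts => .atom p (Tms.lift c ts)
  | _, .bot => .bot
  | _, .top => .top
  | c, .and A B => .and (Fm.lift c A) (Fm.lift c B)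
  | c, .or A B => .or (Fm.lift c A) (Fm.lift c B)
  | c, .imp A B => .imp (Fm.lift c A) (Fm.lift c B)
  | c, .all A => .all (Fm.lift (c+1) A)
  | c, .ex A => .ex (Fm.lift (c+1) A)
end

-- Substitution of a term for de Bruijn variable m.
mutual
def Tm.subst : Nat → Tm → Tm → Tm
  | m, s, .var n => if n < m then .var n else if n = m then s else .var (n-1)
  | _, _, .const k => .const k
  | m, s, .eps A => .eps (Fm.subst (m+1) (Tm.lift 0 s) A)
def Tms.subst : Nat → Tm → Tms → Tms
  | _, _, .nil => .nil
  | m, s, .cons t ts => .cons (Tm.subst m s t) (Tms.subst m s ts)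
def Fm.subst : Nat → Tm → Fm → Fm
  | m, s, .atom p ts => .atom p (Tms.subst m s ts)
  | _, _, .bot => .bot
  | _, _, .top => .top
  | m, s, .and A B => .and (Fm.subst m s A) (Fm.subst m s B)
  | m, s, .or A B => .or (Fm.subst m s A) (Fm.subst m s B)
  | m, s, .imp A B => .imp (Fm.subst m s A) (Fm.subst m s B)
  | m, s, .all A => .all (Fm.subst (m+1) (Tm.lift 0 s) A)
  | m, s, .ex A => .ex (Fm.subst (m+1) (Tm.lift 0 s) A)
end

/-- `A.subst0 t` substitutes `t` for the outermost bound variable. -/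
def Fm.subst0 (A : Fm) (t : Tm) : Fm := Fm.subst 0 t A

/-- `t↓`: definedness of a term.  For `εx A(x)` it is `∃y(∃x A(x) → A(y))`;
for variables and constants it is `⊤`. -/
def Tm.down : Tm → Fm
  | .var _ => .top
  | .const _ => .top
  | .eps A => .ex (.imp (.ex (Fm.lift 1 (Fm.lift 1 A))) (Fm.lift 1 A))

/-- The Gentzen-style sequent calculus IPCε with ε-symbol:
`t↓`-guarded quantifier rules and the ε-form of the `∃`-left rule. -/
inductive IPCe : Set Fm → Fm → Prop
  | ax {Γ A} : A ∈ Γ → IPCe Γ A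
  | botL {Γ A} : Fm.bot ∈ Γ → IPCe Γ A
  | topR {Γ} : IPCe Γ .top
  | andR {Γ A B} : IPCe Γ A → IPCe Γ B → IPCe Γ (.and A B)
  | andL {Γ A B G} : Fm.and A B ∈ Γ → IPCe (insert A (insert B Γ)) G → IPCe Γ G
  | orR₁ {Γ A B} : IPCe Γ A → IPCe Γ (.or A B)
  | orR₂ {Γ A B} : IPCe Γ B → IPCe Γ (.or A B)
  | orL {Γ A B G} : Fm.or A B ∈ Γ → IPCe (insert A Γ) G → IPCe (insert B Γ) G →
      IPCe Γ G
  | impR {Γ A B} : IPCe (insert A Γ) B → IPCe Γ (.imp A B)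
  | impL {Γ A B G} : Fm.imp A B ∈ Γ → IPCe Γ A → IPCe (insert B Γ) G → IPCe Γ G
  | allR {Γ A} : IPCe (Fm.lift 0 '' Γ) A → IPCe Γ (.all A)
  | allL {Γ A t G} : Fm.all A ∈ Γ → IPCe Γ t.down →
      IPCe (insert (A.subst0 t) Γ) G → IPCe Γ G
  | exR {Γ A t} : IPCe Γ t.down → IPCe Γ (A.subst0 t) → IPCe Γ (.ex A)
  | exL {Γ A G} : Fm.ex A ∈ Γ → IPCe (insert (A.subst0 (.eps A)) Γ) G → IPCe Γ G
  | cut {Γ C G} : IPCe Γ C → IPCe (insert C Γ) G → IPCe Γ G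
/-- Extend an environment by one value (for de Bruijn variable 0). -/
def consEnv {Dom : Type} (d : Dom) (ρ : Nat → Dom) : Nat → Dom
  | 0 => d
  | n+1 => ρ n

/-- Evaluation of a term in a world `w` under an environment `ρ`, with constant
interpretation `I` and ε-valuation `V`. -/
def Tm.eval {W Dom : Type} (I : Nat → Dom) (V : W → Fm → (Nat → Dom) → Dom)
    (w : W) (ρ : Nat → Dom) : Tm → Dom
  | .var n => ρ n
  | .const k => I k
  | .eps A => V w A ρ

def Tms.eval {W Dom : Type} (I : Nat → Dom) (V : W → Fm → (Nat → Dom) → Dom)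
    (w : W) (ρ : Nat → Dom) : Tms → List Dom
  | .nil => []
  | .cons t ts => Tm.eval I V w ρ t :: Tms.eval I V w ρ ts

/-- Kripke forcing for the language with ε-terms, in a model with accessibility `le`,
domains `D`, constant interpretation `I`, atomic forcing `atomF`, and ε-valuation `V`. -/
def eforce {W Dom : Type} (le : W → W → Prop) (D : W → Set Dom) (I : Nat → Dom)
    (atomF : W → Nat → List Dom → Prop) (V : W → Fm → (Nat → Dom) → Dom) :
    W → (Nat → Dom) → Fm → Prop
  | w, ρ, .atom p ts => atomF w p (Tms.eval I V w ρ ts)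
  | _, _, .bot => False
  | _, _, .top => True
  | w, ρ, .and A B => eforce le D I atomF V w ρ A ∧ eforce le D I atomF V w ρ B
  | w, ρ, .or A B => eforce le D I atomF V w ρ A ∨ eforce le D I atomF V w ρ B
  | w, ρ, .imp A B => ∀ w', le w w' → eforce le D I atomF V w' ρ A →
      eforce le D I atomF V w' ρ B
  | w, ρ, .all A => ∀ w', le w w' → ∀ d ∈ D w', eforce le D I atomF V w' (consEnv d ρ) A
  | w, ρ, .ex A => ∃ d ∈ D w, eforce le D I atomF V w (consEnv d ρ) A

/-- An intuitionistic Kripke ε⊥-model: a partial order, monotone nonempty domains,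
monotone atomic forcing which is *false* on tuples containing an element outside the
current domain, everywhere-defined constants, and an ε-valuation such that terms
`εx A(x)` defined at `w` (i.e. `w ⊨ (εx A(x))↓`) have a stable value in `D w`. -/
def IsEpsBotModel {W Dom : Type} (le : W → W → Prop) (D : W → Set Dom) (I : Nat → Dom)
    (atomF : W → Nat → List Dom → Prop) (V : W → Fm → (Nat → Dom) → Dom) : Prop :=
  (∀ w, le w w) ∧ (∀ {u v w}, le u v → le v w → le u w) ∧
  (∀ {u v}, le u v → le v u → u = v) ∧
  (∀ w, (D w).Nonempty) ∧ (∀ {w w'}, le w w' → D w ⊆ D w') ∧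
  (∀ w k, I k ∈ D w) ∧
  (∀ {w w'}, le w w' → ∀ p ds, atomF w p ds → atomF w' p ds) ∧
  (∀ w p ds, (∃ d ∈ ds, d ∉ D w) → ¬ atomF w p ds) ∧
  (∀ w A ρ, eforce le D I atomF V w ρ (Tm.down (.eps A)) →
    V w A ρ ∈ D w ∧ ∀ w', le w w' → V w' A ρ = V w A ρ)

/-- The atomic formula `P(x)` for the unary predicate `P`. -/
def Pof (t : Tm) : Fm := .atom 0 (.cons t .nil)

/-! ### Auxiliary development for the countermodel -/

abbrev Env := Nat → Nat

/-- Insert value `d` at position `c` of an environment. -/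
def insEnv (c d : Nat) (ρ : Env) : Env := fun n =>
  if n < c then ρ n else if n = c then d else ρ (n-1)

lemma insEnv_zero (d : Nat) (ρ : Env) : insEnv 0 d ρ = consEnv d ρ := by
  funext n; cases n <;> simp [insEnv, consEnv]

lemma consEnv_insEnv (e c d : Nat) (ρ : Env) :
    consEnv e (insEnv c d ρ) = insEnv (c+1) d (consEnv e ρ) := by
  funext n
  match n with
  | 0 => simp [insEnv, consEnv]
  | n+1 =>
    simp only [consEnv, insEnv]
    rcases lt_trichotomy n c with h | h | h
    · simp [h, Nat.add_lt_add_right h 1]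
    · subst h; simp
    · have h1 : ¬ n < c := by omega
      have h2 : ¬ n+1 < c+1 := by omega
      have h3 : n ≠ c := by omega
      have h4 : n+1 ≠ c+1 := by omega
      simp only [h1, h2, h3, h4, if_neg, if_false]
      have : n - 1 + 1 = n := by omega
      cases n with
      | zero => omega
      | succ k => simp [consEnv]

lemma cons_cons_ins (d y : Nat) (ρ : Env) :
    consEnv d (consEnv y ρ) = insEnv 1 y (consEnv d ρ) := by
  funext n
  match n with
  | 0 => simp [insEnv, consEnv]
  | 1 => simp [insEnv, consEnv]
  | n+2 => simp [insEnv, consEnv]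

lemma cons_shift_ins (d : Nat) (ρ : Env) :
    consEnv d ρ = insEnv 1 (ρ 0) (consEnv d (fun n => ρ (n+1))) := by
  funext n
  match n with
  | 0 => simp [insEnv, consEnv]
  | 1 => simp [insEnv, consEnv]
  | n+2 => simp [insEnv, consEnv]

/-! ### Sizes -/

mutual
def Tm.sz : Tm → Nat
  | .var _ => 1
  | .const _ => 1
  | .eps A => A.sz + 1
def Tms.sz : Tms → Nat
  | .nil => 1
  | .cons t ts => t.sz + ts.sz + 1
def Fm.sz : Fm → Nat
  | .atom _ ts => ts.sz + 1
  | .bot => 1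
  | .top => 1
  | .and A B => A.sz + B.sz + 1
  | .or A B => A.sz + B.sz + 1
  | .imp A B => A.sz + B.sz + 1
  | .all A => A.sz + 1
  | .ex A => A.sz + 1
end

/-! ### The countermodel -/

def leM (a b : Nat) : Prop := a ≤ b

def Dm (w : Nat) : Set Nat := {d | d = 0 ∨ (d = 2 ∧ 2 ≤ w)}

def Im : Nat → Nat := fun _ => 0

def atomFm (w p : Nat) (ds : List Nat) : Prop := p = 0 ∧ ds = [2] ∧ 1 ≤ w

lemma Dm_zero (w : Nat) : (0 : Nat) ∈ Dm w := Or.inl rfl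

lemma Dm_mono {w w' : Nat} (h : w ≤ w') : Dm w ⊆ Dm w' := by
  intro d hd
  rcases hd with h0 | ⟨h2, hw⟩
  · exact Or.inl h0
  · exact Or.inr ⟨h2, le_trans hw h⟩

lemma Dm_02 {w d : Nat} (h : d ∈ Dm w) : d = 0 ∨ d = 2 := by
  rcases h with h | ⟨h, _⟩ <;> [exact Or.inl h; exact Or.inr h]

lemma Dm_small {w d : Nat} (hw : w < 2) (h : d ∈ Dm w) : d = 0 := by
  rcases h with h | ⟨_, h2⟩
  · exact h
  · omega

/-! ### The choice function for ε-terms -/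

open Classical in
/-- Choice of a value for an ε-term from a semantic predicate `p w d`
("the body holds at world `w` of element `d`"). -/
noncomputable def pickV (p : Nat → Nat → Prop) : Nat :=
  if ∀ w, (∃ d ∈ Dm w, p w d) → p w 0 then 0
  else if h : ∃ w, ∃ d ∈ Dm w, p w d then (Nat.find_spec h).choose else 0

lemma pickV_congr {p q : Nat → Nat → Prop} (h : ∀ w d, p w d ↔ q w d) :
    pickV p = pickV q := by
  have : p = q := funext fun w => funext fun d => propext (h w d)
  rw [this]

lemma pickV_02 (p : Nat → Nat → Prop) : pickV p = 0 ∨ pickV p = 2 := by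
  classical
  unfold pickV
  split
  · exact Or.inl rfl
  · split
    · next h =>
      exact Dm_02 (Nat.find_spec h).choose_spec.1
    · exact Or.inl rfl

lemma pickV_spec {p : Nat → Nat → Prop} {w : Nat}
    (hex : ∃ d ∈ Dm w, p w d)
    (hper : ∀ ⦃w₁ w₂ d⦄, w₁ ≤ w₂ → p w₁ d → p w₂ d) :
    p w (pickV p) := by
  classical
  unfold pickV
  split
  · next hall => exact hall w hex
  · next =>
    have h : ∃ w, ∃ d ∈ Dm w, p w d := ⟨w, hex⟩
    rw [dif_pos h]
    have h1 := (Nat.find_spec h).choose_spec.2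
    have h2 : Nat.find h ≤ w := Nat.find_min' h hex
    exact hper h2 h1

lemma pickV_zero {p : Nat → Nat → Prop}
    (h : ∀ w, (∃ d ∈ Dm w, p w d) → p w 0) : pickV p = 0 := by
  classical
  unfold pickV
  rw [if_pos h]

lemma pickV_two {p : Nat → Nat → Prop}
    (h3 : ∀ w d, p w d → d = 2) (w₀ : Nat) (hw : ∃ d ∈ Dm w₀, p w₀ d) :
    pickV p = 2 := by
  classical
  have h1 : ¬ ∀ w, (∃ d ∈ Dm w, p w d) → p w 0 := by
    intro hall
    have := hall w₀ hw
    have := h3 w₀ 0 this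
    omega
  have h : ∃ w, ∃ d ∈ Dm w, p w d := ⟨w₀, hw⟩
  unfold pickV
  rw [if_neg h1, dif_pos h]
  exact h3 _ _ (Nat.find_spec h).choose_spec.2

/-! ### The ε-valuation by recursion on size -/

noncomputable def approx : Nat → Fm → Env → Nat
  | n, B, ρ => pickV (fun w d => eforce leM Dm Im atomFm
      (fun _ B' ρ' => if h : B'.sz < n then approx B'.sz B' ρ' else 0)
      w (consEnv d ρ) B)
termination_by n => n
decreasing_by exact h

noncomputable def VM : Nat → Fm → Env → Nat := fun _ B ρ => approx B.sz B ρ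

abbrev forceM (w : Nat) (ρ : Env) (A : Fm) : Prop := eforce leM Dm Im atomFm VM w ρ A
noncomputable abbrev evalM (w : Nat) (ρ : Env) (t : Tm) : Nat := Tm.eval Im VM w ρ t
noncomputable abbrev evalsM (w : Nat) (ρ : Env) (ts : Tms) : List Nat := Tms.eval Im VM w ρ ts

/-! ### Congruence: `eforce` only depends on `V` below the size of the formula -/

mutual
theorem evalCongr (V₁ V₂ : Nat → Fm → Env → Nat) (n : Nat)
    (H : ∀ w B ρ, Fm.sz B < n → V₁ w B ρ = V₂ w B ρ) : ∀ t : Tm, t.sz ≤ n → ∀ w ρ,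
    Tm.eval Im V₁ w ρ t = Tm.eval Im V₂ w ρ t
  | .var _, _, _, _ => rfl
  | .const _, _, _, _ => rfl
  | .eps B, h, w, ρ => H w B ρ (by simp [Tm.sz] at h; omega)

theorem evalsCongr (V₁ V₂ : Nat → Fm → Env → Nat) (n : Nat)
    (H : ∀ w B ρ, Fm.sz B < n → V₁ w B ρ = V₂ w B ρ) : ∀ ts : Tms, ts.sz ≤ n → ∀ w ρ,
    Tms.eval Im V₁ w ρ ts = Tms.eval Im V₂ w ρ ts
  | .nil, _, _, _ => rfl
  | .cons t ts, h, w, ρ => by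
    have h' : t.sz ≤ n ∧ ts.sz ≤ n := by simp [Tms.sz] at h; omega
    simp only [Tms.eval]
    rw [evalCongr V₁ V₂ n H t h'.1, evalsCongr V₁ V₂ n H ts h'.2]

theorem forceCongr (V₁ V₂ : Nat → Fm → Env → Nat) (n : Nat)
    (H : ∀ w B ρ, Fm.sz B < n → V₁ w B ρ = V₂ w B ρ) : ∀ A : Fm, A.sz ≤ n → ∀ w ρ,
    (eforce leM Dm Im atomFm V₁ w ρ A ↔ eforce leM Dm Im atomFm V₂ w ρ A)
  | .atom p ts, h, w, ρ => by
    have h' : ts.sz ≤ n := by simp [Fm.sz] at h; omega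
    simp only [eforce]
    rw [evalsCongr V₁ V₂ n H ts h']
  | .bot, _, _, _ => Iff.rfl
  | .top, _, _, _ => Iff.rfl
  | .and A B, h, w, ρ => by
    have h' : A.sz ≤ n ∧ B.sz ≤ n := by simp [Fm.sz] at h; omega
    simp only [eforce]
    rw [forceCongr V₁ V₂ n H A h'.1 w ρ, forceCongr V₁ V₂ n H B h'.2 w ρ]
  | .or A B, h, w, ρ => by
    have h' : A.sz ≤ n ∧ B.sz ≤ n := by simp [Fm.sz] at h; omega
    simp only [eforce]
    rw [forceCongr V₁ V₂ n H A h'.1 w ρ, forceCongr V₁ V₂ n H B h'.2 w ρ]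
  | .imp A B, h, w, ρ => by
    have h' : A.sz ≤ n ∧ B.sz ≤ n := by simp [Fm.sz] at h; omega
    simp only [eforce]
    exact forall_congr' fun w' => imp_congr Iff.rfl
      (imp_congr (forceCongr V₁ V₂ n H A h'.1 w' ρ) (forceCongr V₁ V₂ n H B h'.2 w' ρ))
  | .all A, h, w, ρ => by
    have h' : A.sz ≤ n := by simp [Fm.sz] at h; omega
    simp only [eforce]
    exact forall_congr' fun w' => imp_congr Iff.rfl <| forall_congr' fun d =>
      imp_congr Iff.rfl (forceCongr V₁ V₂ n H A h' w' (consEnv d ρ))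
  | .ex A, h, w, ρ => by
    have h' : A.sz ≤ n := by simp [Fm.sz] at h; omega
    simp only [eforce]
    exact exists_congr fun d => and_congr Iff.rfl (forceCongr V₁ V₂ n H A h' w (consEnv d ρ))
end

theorem VM_unfold (w : Nat) (B : Fm) (ρ : Env) :
    VM w B ρ = pickV (fun w' d => forceM w' (consEnv d ρ) B) := by
  show approx B.sz B ρ = _
  rw [approx]
  apply pickV_congr
  intro w' d
  exact forceCongr (fun _ B' ρ' => if h : B'.sz < B.sz then approx B'.sz B' ρ' else 0) VM B.sz
    (fun w'' B' ρ' h => by simp only [dif_pos h]; rfl) B le_rfl w' (consEnv d ρ)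

/-! ### World-independence of term evaluation -/

mutual
theorem evalWindep : ∀ t : Tm, ∀ w w' ρ, evalM w ρ t = evalM w' ρ t
  | .var _, _, _, _ => rfl
  | .const _, _, _, _ => rfl
  | .eps _, _, _, _ => rfl

theorem evalsWindep : ∀ ts : Tms, ∀ w w' ρ, evalsM w ρ ts = evalsM w' ρ ts
  | .nil, _, _, _ => rfl
  | .cons t ts, w, w', ρ => by
    simp only [evalsM, Tms.eval]
    rw [show Tm.eval Im VM w ρ t = Tm.eval Im VM w' ρ t from evalWindep t w w' ρ,
        show Tms.eval Im VM w ρ ts = Tms.eval Im VM w' ρ ts from evalsWindep ts w w' ρ]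
end

/-! ### Persistence (monotonicity) -/

theorem persist : ∀ A : Fm, ∀ {w w' : Nat}, w ≤ w' → ∀ ρ,
    forceM w ρ A → forceM w' ρ A
  | .atom p ts, w, w', h, ρ, hf => by
    simp only [forceM, eforce] at *
    rw [show Tms.eval Im VM w' ρ ts = Tms.eval Im VM w ρ ts from evalsWindep ts w' w ρ]
    exact ⟨hf.1, hf.2.1, le_trans hf.2.2 h⟩
  | .bot, _, _, _, _, hf => hf.elim
  | .top, _, _, _, _, _ => trivial
  | .and A B, w, w', h, ρ, hf =>
    ⟨persist A h ρ hf.1, persist B h ρ hf.2⟩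
  | .or A B, w, w', h, ρ, hf =>
    hf.elim (fun hA => Or.inl (persist A h ρ hA)) (fun hB => Or.inr (persist B h ρ hB))
  | .imp A B, w, w', h, ρ, hf =>
    fun w'' h'' hA => hf w'' (le_trans h h'') hA
  | .all A, w, w', h, ρ, hf =>
    fun w'' h'' d hd => hf w'' (le_trans h h'') d hd
  | .ex A, w, w', h, ρ, hf => by
    obtain ⟨d, hd, hA⟩ := hf
    exact ⟨d, Dm_mono h hd, persist A h (consEnv d ρ) hA⟩

/-! ### Lift lemma -/

mutual
theorem liftT : ∀ t : Tm, ∀ c d ρ w,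
    evalM w (insEnv c d ρ) (Tm.lift c t) = evalM w ρ t
  | .var n, c, d, ρ, w => by
    by_cases h : n < c
    · simp [Tm.lift, h, evalM, Tm.eval, insEnv]
    · have h1 : ¬ n + 1 < c := by omega
      have h2 : n + 1 ≠ c := by omega
      simp [Tm.lift, h, evalM, Tm.eval, insEnv, h1, h2]
  | .const k, _, _, _, _ => rfl
  | .eps A, c, d, ρ, w => by
    simp only [Tm.lift, evalM, Tm.eval]
    rw [VM_unfold, VM_unfold]
    apply pickV_congr
    intro w' e
    rw [consEnv_insEnv]
    exact liftF A (c+1) d (consEnv e ρ) w'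

theorem liftTs : ∀ ts : Tms, ∀ c d ρ w,
    evalsM w (insEnv c d ρ) (Tms.lift c ts) = evalsM w ρ ts
  | .nil, _, _, _, _ => rfl
  | .cons t ts, c, d, ρ, w => by
    simp only [Tms.lift, evalsM, Tms.eval]
    rw [show Tm.eval Im VM w (insEnv c d ρ) (Tm.lift c t) = Tm.eval Im VM w ρ t from
          liftT t c d ρ w,
        show Tms.eval Im VM w (insEnv c d ρ) (Tms.lift c ts) = Tms.eval Im VM w ρ ts from
          liftTs ts c d ρ w]

theorem liftF : ∀ A : Fm, ∀ c d ρ w,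
    (forceM w (insEnv c d ρ) (Fm.lift c A) ↔ forceM w ρ A)
  | .atom p ts, c, d, ρ, w => by
    simp only [Fm.lift, forceM, eforce]
    rw [show Tms.eval Im VM w (insEnv c d ρ) (Tms.lift c ts) = Tms.eval Im VM w ρ ts from
          liftTs ts c d ρ w]
  | .bot, _, _, _, _ => Iff.rfl
  | .top, _, _, _, _ => Iff.rfl
  | .and A B, c, d, ρ, w => by
    simp only [Fm.lift, forceM, eforce]
    exact and_congr (liftF A c d ρ w) (liftF B c d ρ w)
  | .or A B, c, d, ρ, w => by
    simp only [Fm.lift, forceM, eforce]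
    exact or_congr (liftF A c d ρ w) (liftF B c d ρ w)
  | .imp A B, c, d, ρ, w => by
    simp only [Fm.lift, forceM, eforce]
    exact forall_congr' fun w' => imp_congr Iff.rfl
      (imp_congr (liftF A c d ρ w') (liftF B c d ρ w'))
  | .all A, c, d, ρ, w => by
    simp only [Fm.lift, forceM, eforce]
    refine forall_congr' fun w' => imp_congr Iff.rfl <| forall_congr' fun e =>
      imp_congr Iff.rfl ?_
    rw [consEnv_insEnv]
    exact liftF A (c+1) d (consEnv e ρ) w'
  | .ex A, c, d, ρ, w => by
    simp only [Fm.lift, forceM, eforce]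
    refine exists_congr fun e => and_congr Iff.rfl ?_
    rw [consEnv_insEnv]
    exact liftF A (c+1) d (consEnv e ρ) w
end

/-! ### Substitution lemma -/

mutual
theorem substT : ∀ t : Tm, ∀ m s ρ w,
    evalM w ρ (Tm.subst m s t) = evalM w (insEnv m (evalM w ρ s) ρ) t
  | .var n, m, s, ρ, w => by
    rcases lt_trichotomy n m with h | h | h
    · simp [Tm.subst, h, evalM, Tm.eval, insEnv]
    · subst h; simp [Tm.subst, evalM, Tm.eval, insEnv]
    · have h1 : ¬ n < m := by omega
      have h2 : n ≠ m := by omega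
      simp [Tm.subst, h1, h2, evalM, Tm.eval, insEnv]
  | .const k, _, _, _, _ => rfl
  | .eps A, m, s, ρ, w => by
    simp only [Tm.subst, evalM, Tm.eval]
    rw [VM_unfold, VM_unfold]
    apply pickV_congr
    intro w' e
    have h1 := substF A (m+1) (Tm.lift 0 s) (consEnv e ρ) w'
    have h2 : evalM w' (consEnv e ρ) (Tm.lift 0 s) = evalM w ρ s := by
      rw [← insEnv_zero e ρ, liftT s 0 e ρ w']
      exact evalWindep s w' w ρ
    rw [h2] at h1
    rw [← consEnv_insEnv] at h1
    exact h1

theorem substTs : ∀ ts : Tms, ∀ m s ρ w,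
    evalsM w ρ (Tms.subst m s ts) = evalsM w (insEnv m (evalM w ρ s) ρ) ts
  | .nil, _, _, _, _ => rfl
  | .cons t ts, m, s, ρ, w => by
    simp only [Tms.subst, evalsM, Tms.eval]
    rw [show Tm.eval Im VM w ρ (Tm.subst m s t)
          = Tm.eval Im VM w (insEnv m (evalM w ρ s) ρ) t from substT t m s ρ w,
        show Tms.eval Im VM w ρ (Tms.subst m s ts)
          = Tms.eval Im VM w (insEnv m (evalM w ρ s) ρ) ts from substTs ts m s ρ w]

theorem substF : ∀ A : Fm, ∀ m s ρ w,
    (forceM w ρ (Fm.subst m s A) ↔ forceM w (insEnv m (evalM w ρ s) ρ) A)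
  | .atom p ts, m, s, ρ, w => by
    simp only [Fm.subst, forceM, eforce]
    rw [show Tms.eval Im VM w ρ (Tms.subst m s ts)
          = Tms.eval Im VM w (insEnv m (evalM w ρ s) ρ) ts from substTs ts m s ρ w]
  | .bot, _, _, _, _ => Iff.rfl
  | .top, _, _, _, _ => Iff.rfl
  | .and A B, m, s, ρ, w => by
    simp only [Fm.subst, forceM, eforce]
    exact and_congr (substF A m s ρ w) (substF B m s ρ w)
  | .or A B, m, s, ρ, w => by
    simp only [Fm.subst, forceM, eforce]
    exact or_congr (substF A m s ρ w) (substF B m s ρ w)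
  | .imp A B, m, s, ρ, w => by
    simp only [Fm.subst, forceM, eforce]
    refine forall_congr' fun w' => imp_congr Iff.rfl (imp_congr ?_ ?_)
    · have h := substF A m s ρ w'
      rwa [show evalM w' ρ s = evalM w ρ s from evalWindep s w' w ρ] at h
    · have h := substF B m s ρ w'
      rwa [show evalM w' ρ s = evalM w ρ s from evalWindep s w' w ρ] at h
  | .all A, m, s, ρ, w => by
    simp only [Fm.subst, forceM, eforce]
    refine forall_congr' fun w' => imp_congr Iff.rfl <| forall_congr' fun e =>
      imp_congr Iff.rfl ?_
    have h := substF A (m+1) (Tm.lift 0 s) (consEnv e ρ) w'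
    have h2 : evalM w' (consEnv e ρ) (Tm.lift 0 s) = evalM w ρ s := by
      rw [← insEnv_zero e ρ, liftT s 0 e ρ w']
      exact evalWindep s w' w ρ
    rw [h2, ← consEnv_insEnv] at h
    exact h
  | .ex A, m, s, ρ, w => by
    simp only [Fm.subst, forceM, eforce]
    refine exists_congr fun e => and_congr Iff.rfl ?_
    have h := substF A (m+1) (Tm.lift 0 s) (consEnv e ρ) w
    have h2 : evalM w (consEnv e ρ) (Tm.lift 0 s) = evalM w ρ s := by
      rw [← insEnv_zero e ρ, liftT s 0 e ρ w]
    rw [h2, ← consEnv_insEnv] at h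
    exact h
end

/-- The substitution lemma for `subst0`. -/
theorem subst0F (A : Fm) (t : Tm) (ρ : Env) (w : Nat) :
    forceM w ρ (A.subst0 t) ↔ forceM w (consEnv (evalM w ρ t) ρ) A := by
  have h := substF A 0 t ρ w
  rwa [insEnv_zero] at h

/-! ### Characterization of `(εx B)↓` -/

theorem down_eps (B : Fm) (ρ : Env) (w : Nat) :
    forceM w ρ ((Tm.eps B).down) ↔
      ∃ y ∈ Dm w, ∀ w', w ≤ w' →
        ((∃ d ∈ Dm w', forceM w' (consEnv d (fun n => ρ (n+1))) B) →
          forceM w' (consEnv y (fun n => ρ (n+1))) B) := by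
  simp only [Tm.down, forceM, eforce]
  refine exists_congr fun y => and_congr Iff.rfl <| forall_congr' fun w' =>
    imp_congr Iff.rfl (imp_congr ?_ ?_)
  · refine exists_congr fun d => and_congr Iff.rfl ?_
    rw [cons_cons_ins]
    refine (liftF (Fm.lift 1 B) 1 y (consEnv d ρ) w').trans ?_
    rw [cons_shift_ins d ρ]
    exact liftF B 1 (ρ 0) (consEnv d (fun n => ρ (n+1))) w'
  · rw [cons_shift_ins y ρ]
    exact liftF B 1 (ρ 0) (consEnv y (fun n => ρ (n+1))) w'

/-! ### Key properties of the ε-valuation -/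

theorem VM_exL {B : Fm} {ρ : Env} {w : Nat}
    (h : ∃ d ∈ Dm w, forceM w (consEnv d ρ) B) :
    forceM w (consEnv (VM w B ρ) ρ) B := by
  rw [VM_unfold]
  exact pickV_spec h (fun w₁ w₂ d h12 => persist B h12 (consEnv d ρ))

theorem VM_defined {B : Fm} {ρ : Env} {w : Nat} (hρ : ∀ n, ρ n ∈ Dm w)
    (h : forceM w ρ ((Tm.eps B).down)) : VM w B ρ ∈ Dm w := by
  by_cases hw : 2 ≤ w
  · rw [VM_unfold]
    rcases pickV_02 (fun w' d => forceM w' (consEnv d ρ) B) with h0 | h2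
    · rw [h0]; exact Dm_zero w
    · rw [h2]; exact Or.inr ⟨rfl, hw⟩
  · have hρ0 : ρ = fun _ => 0 := funext fun n => Dm_small (by omega) (hρ n)
    obtain ⟨y, hy, hcond⟩ := (down_eps B ρ w).mp h
    have hy0 : y = 0 := Dm_small (by omega) hy
    subst hy0
    have hσ : (fun n => ρ (n+1)) = ρ := by rw [hρ0]
    rw [hσ] at hcond
    rw [VM_unfold, pickV_zero]
    · exact Dm_zero w
    · intro w₁ hex
      by_cases h1 : w ≤ w₁
      · exact hcond w₁ h1 hex
      · obtain ⟨d, hd, hB⟩ := hex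
        have hd0 : d = 0 := Dm_small (by omega) hd
        subst hd0; exact hB

theorem evalM_mem {t : Tm} {ρ : Env} {w : Nat} (hρ : ∀ n, ρ n ∈ Dm w)
    (h : forceM w ρ t.down) : evalM w ρ t ∈ Dm w := by
  cases t with
  | var n => exact hρ n
  | const k => exact Dm_zero w
  | eps B => exact VM_defined hρ h

/-! ### Soundness of IPCε in the countermodel -/

theorem soundM {Γ : Set Fm} {G : Fm} (h : IPCe Γ G) : ∀ w ρ, (∀ n, ρ n ∈ Dm w) →
    (∀ A ∈ Γ, forceM w ρ A) → forceM w ρ G := by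
  induction h with
  | @ax Γ A hmem => intro w ρ hρ hΓ; exact hΓ _ hmem
  | @botL Γ A hmem => intro w ρ hρ hΓ; exact absurd (hΓ _ hmem) (by simp [forceM, eforce])
  | @topR Γ => intro w ρ hρ hΓ; trivial
  | @andR Γ A B h1 h2 ih1 ih2 =>
    intro w ρ hρ hΓ
    exact ⟨ih1 w ρ hρ hΓ, ih2 w ρ hρ hΓ⟩
  | @andL Γ A B G hmem h ih =>
    intro w ρ hρ hΓ
    have hab : forceM w ρ A ∧ forceM w ρ B := hΓ _ hmem
    refine ih w ρ hρ ?_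
    intro A' hA'
    simp only [Set.mem_insert_iff] at hA'
    rcases hA' with rfl | rfl | hA'
    · exact hab.1
    · exact hab.2
    · exact hΓ _ hA'
  | @orR₁ Γ A B h ih =>
    intro w ρ hρ hΓ
    exact Or.inl (ih w ρ hρ hΓ)
  | @orR₂ Γ A B h ih =>
    intro w ρ hρ hΓ
    exact Or.inr (ih w ρ hρ hΓ)
  | @orL Γ A B G hmem h1 h2 ih1 ih2 =>
    intro w ρ hρ hΓ
    have hab : forceM w ρ A ∨ forceM w ρ B := hΓ _ hmem
    rcases hab with hA | hB
    · refine ih1 w ρ hρ ?_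
      intro A' hA'
      simp only [Set.mem_insert_iff] at hA'
      rcases hA' with rfl | hA'
      · exact hA
      · exact hΓ _ hA'
    · refine ih2 w ρ hρ ?_
      intro A' hA'
      simp only [Set.mem_insert_iff] at hA'
      rcases hA' with rfl | hA'
      · exact hB
      · exact hΓ _ hA'
  | @impR Γ A B h ih =>
    intro w ρ hρ hΓ
    show ∀ w', leM w w' → forceM w' ρ A → forceM w' ρ B
    intro w' hle hA
    refine ih w' ρ (fun n => Dm_mono hle (hρ n)) ?_
    intro A' hA'
    simp only [Set.mem_insert_iff] at hA'
    rcases hA' with rfl | hA'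
    · exact hA
    · exact persist _ hle ρ (hΓ _ hA')
  | @impL Γ A B G hmem h1 h2 ih1 ih2 =>
    intro w ρ hρ hΓ
    have himp : ∀ w', leM w w' → forceM w' ρ A → forceM w' ρ B := hΓ _ hmem
    have hA := ih1 w ρ hρ hΓ
    have hB := himp w (le_refl w) hA
    refine ih2 w ρ hρ ?_
    intro A' hA'
    simp only [Set.mem_insert_iff] at hA'
    rcases hA' with rfl | hA'
    · exact hB
    · exact hΓ _ hA'
  | @allR Γ A h ih =>
    intro w ρ hρ hΓ
    show ∀ w', leM w w' → ∀ d ∈ Dm w', forceM w' (consEnv d ρ) A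
    intro w' hle d hd
    refine ih w' (consEnv d ρ) ?_ ?_
    · intro n
      cases n with
      | zero => exact hd
      | succ k => exact Dm_mono hle (hρ k)
    · intro A' hA'
      obtain ⟨C, hC, rfl⟩ := hA'
      have hC' := persist C hle ρ (hΓ C hC)
      rw [← insEnv_zero d ρ]
      exact (liftF C 0 d ρ w').mpr hC'
  | @allL Γ A t G hmem h1 h2 ih1 ih2 =>
    intro w ρ hρ hΓ
    have hall : ∀ w', leM w w' → ∀ d ∈ Dm w', forceM w' (consEnv d ρ) A := hΓ _ hmem
    have hdown := ih1 w ρ hρ hΓ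
    have hmem' := evalM_mem hρ hdown
    have hAt : forceM w (consEnv (evalM w ρ t) ρ) A := hall w (le_refl w) _ hmem'
    have hsub : forceM w ρ (A.subst0 t) := (subst0F A t ρ w).mpr hAt
    refine ih2 w ρ hρ ?_
    intro A' hA'
    simp only [Set.mem_insert_iff] at hA'
    rcases hA' with rfl | hA'
    · exact hsub
    · exact hΓ _ hA'
  | @exR Γ A t h1 h2 ih1 ih2 =>
    intro w ρ hρ hΓ
    have hdown := ih1 w ρ hρ hΓ
    have hmem' := evalM_mem hρ hdown
    have hAt := (subst0F A t ρ w).mp (ih2 w ρ hρ hΓ)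
    exact ⟨evalM w ρ t, hmem', hAt⟩
  | @exL Γ A G hmem h ih =>
    intro w ρ hρ hΓ
    have hex : ∃ d ∈ Dm w, forceM w (consEnv d ρ) A := hΓ _ hmem
    have hkey := VM_exL hex
    have hsub : forceM w ρ (A.subst0 (.eps A)) := (subst0F A (.eps A) ρ w).mpr hkey
    refine ih w ρ hρ ?_
    intro A' hA'
    simp only [Set.mem_insert_iff] at hA'
    rcases hA' with rfl | hA'
    · exact hsub
    · exact hΓ _ hA'
  | @cut Γ C G h1 h2 ih1 ih2 =>
    intro w ρ hρ hΓ
    have hC := ih1 w ρ hρ hΓ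
    refine ih2 w ρ hρ ?_
    intro A' hA'
    simp only [Set.mem_insert_iff] at hA'
    rcases hA' with rfl | hA'
    · exact hC
    · exact hΓ _ hA'


/-- the formula `P(εx P(x)) → ∃x P(x)` is valid in all intuitionistic
Kripke ε⊥-models but is not derivable in IPCε; hence the ε⊥-semantics is incomplete
for IPCε. -/
theorem epsBot_semantics_incomplete :
    (∀ {W Dom : Type} (le : W → W → Prop) (D : W → Set Dom) (I : Nat → Dom)
       (atomF : W → Nat → List Dom → Prop) (V : W → Fm → (Nat → Dom) → Dom),
       IsEpsBotModel le D I atomF V →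
       ∀ (w : W) (ρ : Nat → Dom),
         eforce le D I atomF V w ρ
           (.imp (Pof (.eps (Pof (.var 0)))) (.ex (Pof (.var 0))))) ∧
    ¬ IPCe ∅ (.imp (Pof (.eps (Pof (.var 0)))) (.ex (Pof (.var 0)))) := by
  constructor
  · -- Validity in all ε⊥-models
    intro W Dom le D I atomF V hM w ρ
    obtain ⟨hrefl, htrans, hanti, hne, hDmono, hI, hatomMono, hatomFalse, hV⟩ := hM
    intro w' hle hP
    have hP' : atomF w' 0 [V w' (Pof (.var 0)) ρ] := hP
    have hv : V w' (Pof (.var 0)) ρ ∈ D w' := by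
      by_contra hv
      exact hatomFalse w' 0 [V w' (Pof (.var 0)) ρ] ⟨V w' (Pof (.var 0)) ρ, by simp, hv⟩ hP'
    exact ⟨V w' (Pof (.var 0)) ρ, hv, hP'⟩
  · -- Underivability in IPCε, via the countermodel
    intro hder
    have hs := soundM hder 0 (fun _ => 0) (fun _ => Dm_zero 0)
      (fun A hA => absurd hA (Set.notMem_empty A))
    have hVM : VM 1 (Pof (.var 0)) (fun _ => 0) = 2 := by
      rw [VM_unfold]
      refine pickV_two (fun w d hp => ?_) 2
        ⟨2, Or.inr ⟨rfl, le_refl 2⟩, (show atomFm 2 0 [2] from ⟨rfl, rfl, by omega⟩)⟩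
      have hp' : atomFm w 0 [d] := hp
      have h2 := hp'.2.1
      simpa using h2
    have h1 : forceM 1 (fun _ => 0) (Pof (.eps (Pof (.var 0)))) := by
      show atomFm 1 0 [VM 1 (Pof (.var 0)) (fun _ => 0)]
      rw [hVM]
      exact ⟨rfl, rfl, le_refl 1⟩
    have h2 := hs 1 (by simp [leM]) h1
    obtain ⟨d, hd, hPd⟩ := h2
    have hPd' : atomFm 1 0 [d] := hPd
    have hd2 : d = 2 := by
      have := hPd'.2.1
      simpa using this
    subst hd2
    rcases hd with h | ⟨_, h⟩ <;> omega
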